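/- arXiv:1402.4967 — 3 statements merged into one kernel-verified Lean document; each statement's English description precedes it below -/
import Mathlib

section
/- Let I = [a,b], d = b−a, A the Dirichlet Laplacian on L²(I), and τ : D(A) → ℂ², τu := (u'(a), −u'(b)). Define G := (τ(−A)^{-1})* : ℂ² → L²(I). Then (Gξ)(x) = (ξ₁(b−x) + ξ₂(x−a))/d, and G*G equals the 2×2 matrix d·[[1/3, 1/6],[1/6, 1/3]]; in particular G*G is positive definite with eigenvalues d/2 and d/6. -/
open MeasureTheory Set

/-!
Writing `d = b - a`, `G ξ = ξ₁ φ₁ + ξ₂ φ₂` with the hat functions `φ₁ = (b - x)/d`,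
`φ₂ = (x - a)/d`, so the adjoint formula is linearity of the integral and the Gram matrix
`⟨φᵢ, φⱼ⟩` comes from `∫ (b - x)² = ∫ (x - a)² = d³/3` and `∫ (b - x)(x - a) = d³/6`.
Positivity follows from the spectral form of the Gram form,
`(d/4)|ξ₁ + ξ₂|² + (d/12)|ξ₁ - ξ₂|²`.
-/

/-- The map `G : ℂ² → L²(a,b)`, `(G ξ)(x) = (ξ₁(b−x) + ξ₂(x−a))/d`, `d = b−a`. -/
noncomputable def gfun (a b : ℝ) (ξ : ℂ × ℂ) (x : ℝ) : ℂ :=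
  (ξ.1 * ((b - x : ℝ) : ℂ) + ξ.2 * ((x - a : ℝ) : ℂ)) / ((b - a : ℝ) : ℂ)

open ComplexConjugate

section Moments

variable (a b : ℝ)

theorem integral_sub_left_sq : ∫ x in a..b, (b - x) ^ 2 = (b - a) ^ 3 / 3 := by
  rw [intervalIntegral.integral_comp_sub_left (· ^ 2)]
  norm_num [integral_pow]

theorem integral_sub_right_sq : ∫ x in a..b, (x - a) ^ 2 = (b - a) ^ 3 / 3 := by
  rw [intervalIntegral.integral_comp_sub_right (· ^ 2)]
  norm_num [integral_pow]

theorem integral_sub_left_mul_sub_right :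
    ∫ x in a..b, (b - x) * (x - a) = (b - a) ^ 3 / 6 := by
  have hsplit : ∀ x, (b - x) * (x - a) = (b - a) * (x - a) ^ 1 - (x - a) ^ 2 :=
    fun x => by ring
  simp only [hsplit]
  rw [intervalIntegral.integral_sub (Continuous.intervalIntegrable (by fun_prop) _ _)
      (Continuous.intervalIntegrable (by fun_prop) _ _),
    intervalIntegral.integral_const_mul, intervalIntegral.integral_comp_sub_right (· ^ 1),
    intervalIntegral.integral_comp_sub_right (· ^ 2)]
  norm_num [integral_pow]
  ring

theorem conj_gfun_mul (ξ : ℂ × ℂ) (f : ℝ → ℂ) (x : ℝ) :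
    conj (gfun a b ξ x) * f x =
      conj ξ.1 * (((b - a : ℝ) : ℂ)⁻¹ * (((b - x : ℝ) : ℂ) * f x))
        + conj ξ.2 * (((b - a : ℝ) : ℂ)⁻¹ * (((x - a : ℝ) : ℂ) * f x)) := by
  simp only [gfun, map_div₀, map_add, map_mul, Complex.conj_ofReal]
  ring

theorem integral_conj_gfun_mul (ξ : ℂ × ℂ) {f : ℝ → ℂ}
    (hf : IntervalIntegrable f volume a b) :
    ∫ x in a..b, conj (gfun a b ξ x) * f x =
      conj ξ.1 * (((b - a : ℝ) : ℂ)⁻¹ * ∫ x in a..b, ((b - x : ℝ) : ℂ) * f x)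
        + conj ξ.2 * (((b - a : ℝ) : ℂ)⁻¹ * ∫ x in a..b, ((x - a : ℝ) : ℂ) * f x) := by
  have hint : ∀ (c : ℂ) (g : ℝ → ℝ), Continuous g →
      IntervalIntegrable (fun x => c * (((g x : ℝ) : ℂ) * f x)) volume a b :=
    fun c g hg => (hf.continuousOn_mul (Complex.continuous_ofReal.comp hg).continuousOn).const_mul c
  simp only [conj_gfun_mul]
  rw [intervalIntegral.integral_add ((hint _ _ (by fun_prop)).const_mul _)
    ((hint _ _ (by fun_prop)).const_mul _)]
  simp only [intervalIntegral.integral_const_mul]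

theorem conj_gfun_mul_gfun (ξ ζ : ℂ × ℂ) (x : ℝ) :
    conj (gfun a b ξ x) * gfun a b ζ x =
      (conj ξ.1 * ζ.1 * ((b - x) ^ 2 : ℝ) + conj ξ.2 * ζ.2 * ((x - a) ^ 2 : ℝ)
        + (conj ξ.1 * ζ.2 + conj ξ.2 * ζ.1) * ((b - x) * (x - a) : ℝ))
        / ((b - a : ℝ) : ℂ) ^ 2 := by
  simp only [gfun, map_div₀, map_add, map_mul, Complex.conj_ofReal]
  rw [div_mul_div_comm, ← sq]
  push_cast
  ring

theorem integral_conj_gfun_mul_gfun (ξ ζ : ℂ × ℂ) :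
    ∫ x in a..b, conj (gfun a b ξ x) * gfun a b ζ x =
      ((b - a : ℝ) : ℂ) * (1 / 3 * (conj ξ.1 * ζ.1 + conj ξ.2 * ζ.2)
        + 1 / 6 * (conj ξ.1 * ζ.2 + conj ξ.2 * ζ.1)) := by
  rcases eq_or_ne a b with rfl | hab
  · simp
  have hint : ∀ (c : ℂ) (g : ℝ → ℝ), Continuous g →
      IntervalIntegrable (fun x => c * ((g x : ℝ) : ℂ)) volume a b :=
    fun c g hg => Continuous.intervalIntegrable (by fun_prop) _ _
  simp only [conj_gfun_mul_gfun]
  rw [intervalIntegral.integral_div,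
    intervalIntegral.integral_add ((hint _ _ (by fun_prop)).add (hint _ _ (by fun_prop)))
      (hint _ _ (by fun_prop)),
    intervalIntegral.integral_add (hint _ _ (by fun_prop)) (hint _ _ (by fun_prop))]
  simp only [intervalIntegral.integral_const_mul, intervalIntegral.integral_ofReal,
    integral_sub_left_sq, integral_sub_right_sq, integral_sub_left_mul_sub_right]
  have hd : ((b - a : ℝ) : ℂ) ≠ 0 := Complex.ofReal_ne_zero.2 (sub_ne_zero.2 hab.symm)
  field_simp
  push_cast
  ring

end Moments

theorem gram_form_eq (z w : ℂ) :
    1 / 3 * (conj z * z + conj w * w) + 1 / 6 * (conj z * w + conj w * z)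
      = ((‖z + w‖ ^ 2 / 4 + ‖z - w‖ ^ 2 / 12 : ℝ) : ℂ) := by
  push_cast
  rw [← Complex.conj_mul', ← Complex.conj_mul']
  simp only [map_add, map_sub]
  ring

theorem intervalIntegrable_of_memLp_Icc {E : Type*} [NormedAddCommGroup E] {a b : ℝ}
    {p : ENNReal} (hp : 1 ≤ p) (hab : a ≤ b) {f : ℝ → E}
    (hf : MemLp f p (volume.restrict (Icc a b))) : IntervalIntegrable f volume a b :=
  (intervalIntegrable_iff_integrableOn_Icc_of_le hab).2 (hf.integrable hp)

theorem re_integral_conj_gfun_mul_gfun_pos {a b : ℝ} (hab : a < b) {ξ : ℂ × ℂ}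
    (hξ : ξ ≠ 0) :
    0 < (∫ x in a..b, conj (gfun a b ξ x) * gfun a b ξ x).re := by
  obtain ⟨z, w⟩ := ξ
  rw [integral_conj_gfun_mul_gfun, gram_form_eq, ← Complex.ofReal_mul, Complex.ofReal_re]
  refine mul_pos (sub_pos.2 hab) (lt_of_le_of_ne (by positivity) fun h => hξ ?_)
  obtain ⟨hplus, hminus⟩ := (add_eq_zero_iff_of_nonneg (by positivity) (by positivity)).1 h.symm
  norm_num at hplus hminus
  exact Prod.mk_eq_zero.2 ⟨by linear_combination (hplus + hminus) / 2,
    by linear_combination (hplus - hminus) / 2⟩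

theorem smul_mulVec_one_one_eq_half_smul (d : ℝ) :
    ((d : ℂ) • Matrix.of ![![(1 : ℂ) / 3, 1 / 6], ![1 / 6, 1 / 3]]).mulVec ![1, 1]
      = ((d / 2 : ℝ) : ℂ) • ![1, 1] := by
  ext i
  fin_cases i <;> simp [Matrix.mulVec, dotProduct] <;> ring

theorem smul_mulVec_one_neg_one_eq_sixth_smul (d : ℝ) :
    ((d : ℂ) • Matrix.of ![![(1 : ℂ) / 3, 1 / 6], ![1 / 6, 1 / 3]]).mulVec ![1, -1]
      = ((d / 6 : ℝ) : ℂ) • ![1, -1] := by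
  ext i
  fin_cases i <;> simp [Matrix.mulVec, dotProduct] <;> ring

/-- On `I = [a,b]`, `d = b−a > 0`, with `A` the Dirichlet Laplacian and
`τ u := (u'(a), −u'(b))`, the operator `G := (τ(−A)⁻¹)* : ℂ² → L²(I)` is given by
`(Gξ)(x) = (ξ₁(b−x) + ξ₂(x−a))/d`: it satisfies the adjoint identity
`⟨Gξ, f⟩_{L²} = ⟨ξ, G*f⟩_{ℂ²}` with `G*f = (1/d)(∫(b−x)f, ∫(x−a)f)`; moreover
`G*G = d·[[1/3,1/6],[1/6,1/3]]` (as a sesquilinear form on `ℂ²`), which is positive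
definite with eigenvalues `d/2` (eigenvector `(1,1)`) and `d/6` (eigenvector `(1,−1)`). -/
theorem stmt_13 (a b : ℝ) (hab : a < b) :
    (∀ (ξ : ℂ × ℂ) (f : ℝ → ℂ), MemLp f 2 (volume.restrict (Icc a b)) →
      (∫ x in a..b, (starRingEnd ℂ) (gfun a b ξ x) * f x)
        = (starRingEnd ℂ) ξ.1 * (((b - a : ℝ) : ℂ)⁻¹ *
              ∫ x in a..b, ((b - x : ℝ) : ℂ) * f x)
          + (starRingEnd ℂ) ξ.2 * (((b - a : ℝ) : ℂ)⁻¹ *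
              ∫ x in a..b, ((x - a : ℝ) : ℂ) * f x)) ∧
    (∀ ξ ζ : ℂ × ℂ,
      (∫ x in a..b, (starRingEnd ℂ) (gfun a b ξ x) * gfun a b ζ x)
        = ((b - a : ℝ) : ℂ) *
            ((1 / 3) * ((starRingEnd ℂ) ξ.1 * ζ.1 + (starRingEnd ℂ) ξ.2 * ζ.2)
              + (1 / 6) * ((starRingEnd ℂ) ξ.1 * ζ.2 + (starRingEnd ℂ) ξ.2 * ζ.1))) ∧
    (∀ ξ : ℂ × ℂ, ξ ≠ 0 →
      0 < (∫ x in a..b, (starRingEnd ℂ) (gfun a b ξ x) * gfun a b ξ x).re) ∧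
    (((b - a : ℝ) : ℂ) • (Matrix.of ![![(1 : ℂ) / 3, 1 / 6], ![1 / 6, 1 / 3]])).mulVec
        ![1, 1] = (((b - a) / 2 : ℝ) : ℂ) • ![1, 1] ∧
    (((b - a : ℝ) : ℂ) • (Matrix.of ![![(1 : ℂ) / 3, 1 / 6], ![1 / 6, 1 / 3]])).mulVec
        ![1, -1] = (((b - a) / 6 : ℝ) : ℂ) • ![1, -1] :=
  ⟨fun ξ _ hf => integral_conj_gfun_mul a b ξ
      (intervalIntegrable_of_memLp_Icc one_le_two hab.le hf),
    integral_conj_gfun_mul_gfun a b,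
    fun _ hξ => re_integral_conj_gfun_mul_gfun_pos hab hξ,
    smul_mulVec_one_one_eq_half_smul (b - a),
    smul_mulVec_one_neg_one_eq_sixth_smul (b - a)⟩
end

section
/- Let {x_n}_{n∈ℕ} ⊂ ℝ be strictly increasing with d_n := x_{n+1} − x_n, and for each n let τ_n u := (u'(x_n), −u'(x_{n+1})) act on the Dirichlet domain D(A_n) on [x_n, x_{n+1}]. Then the direct sum trace map ⊕_n τ_n is bounded and surjective from ⊕_n D(A_n) onto the weighted space ℓ²_d(ℕ) ⊕ ℓ²_d(ℕ), where ℓ²_d(ℕ) := {(s_n) : Σ_n |s_n|²/d_n < ∞}. Moreover ℓ²_d(ℕ) = ℓ²(ℕ) (with equivalent norms) if and only if 0 < inf_n d_n ≤ sup_n d_n < ∞. -/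
/-!
Since `∫ₐᵇ u' = u(b) - u(a) = 0`, the value `u'(a)` is the mean of `u'(a) - u'` over `[a, b]`,
and `|u'(y) - u'(a)| ≤ ∫ₐᵇ |u''|`; so both `|u'(a)|` and `|u'(b)|` are at most `2 ∫ₐᵇ |u''|`, which
Cauchy–Schwarz bounds by `2 ((b - a) ∫ₐᵇ |u''|²)^{1/2}`. Conversely, the cubic vanishing at `a`
and `b` with slopes `p` and `q` there has `|u''| ≲ (|p| + |q|) / (b - a)`, hence
`∫ₐᵇ |u''|² ≲ (|p|² + |q|²) / (b - a)`, which gives surjectivity. The equivalence of the weighted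
and unweighted norms is tested on unit sequences.
-/

open MeasureTheory Set

/-- Membership in the Dirichlet domain `D(A)` on `[a,b]`:
`u ∈ C¹([a,b])` with derivative `u'`, `u'` absolutely continuous with density
`g = u'' ∈ L²(a,b)`, and `u(a) = u(b) = 0`. -/
def IsDirDom (a b : ℝ) (u u' g : ℝ → ℂ) : Prop :=
  (∀ x ∈ Icc a b, HasDerivWithinAt u (u' x) (Icc a b) x) ∧
  (∀ x ∈ Icc a b, u' x = u' a + ∫ t in a..x, g t) ∧
  MemLp g 2 (volume.restrict (Ioo a b)) ∧
  u a = 0 ∧ u b = 0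

theorem sq_intervalIntegral_le_mul_intervalIntegral_sq {f : ℝ → ℝ} {a b : ℝ} (hab : a < b)
    (hf : IntervalIntegrable f volume a b)
    (hf2 : IntervalIntegrable (fun t => f t ^ 2) volume a b) :
    (∫ t in a..b, f t) ^ 2 ≤ (b - a) * ∫ t in a..b, f t ^ 2 := by
  have hd : 0 < b - a := sub_pos.2 hab
  set K := ∫ t in a..b, f t
  set c := K / (b - a)
  have hK : K = c * (b - a) := (div_mul_cancel₀ K hd.ne').symm
  have hexpand : ∫ t in a..b, (f t - c) ^ 2
      = (∫ t in a..b, f t ^ 2) - 2 * c * K + c ^ 2 * (b - a) := by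
    have hpt : ∀ t, (f t - c) ^ 2 = f t ^ 2 - 2 * c * f t + c ^ 2 := fun t => by ring
    simp_rw [hpt]
    rw [intervalIntegral.integral_add (hf2.sub (hf.const_mul _)) intervalIntegrable_const,
      intervalIntegral.integral_sub hf2 (hf.const_mul _), intervalIntegral.integral_const_mul,
      intervalIntegral.integral_const, smul_eq_mul]
    ring
  have hvar : 0 ≤ ∫ t in a..b, (f t - c) ^ 2 :=
    intervalIntegral.integral_nonneg hab.le fun t _ => sq_nonneg _
  rw [hexpand] at hvar
  nlinarith [mul_nonneg hd.le hvar]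

namespace IsDirDom

variable {a b : ℝ} {u u' g : ℝ → ℂ}

theorem intervalIntegrable (h : IsDirDom a b u u' g) (hab : a ≤ b) :
    IntervalIntegrable g volume a b :=
  (intervalIntegrable_iff_integrableOn_Ioo_of_le hab).2 (h.2.2.1.integrable one_le_two)

theorem intervalIntegrable_norm_sq (h : IsDirDom a b u u' g) (hab : a ≤ b) :
    IntervalIntegrable (fun t => ‖g t‖ ^ 2) volume a b :=
  (intervalIntegrable_iff_integrableOn_Ioo_of_le hab).2 h.2.2.1.norm.integrable_sq

theorem continuousOn_deriv (h : IsDirDom a b u u' g) (hab : a ≤ b) :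
    ContinuousOn u' (Icc a b) := by
  have hint := (intervalIntegrable_iff_integrableOn_Icc_of_le hab).1 (h.intervalIntegrable hab)
  have hprim := intervalIntegral.continuousOn_primitive_interval (by rwa [uIcc_of_le hab])
  rw [uIcc_of_le hab] at hprim
  exact (continuousOn_const.add hprim).congr h.2.1

theorem integral_deriv_eq_zero (h : IsDirDom a b u u' g) (hab : a ≤ b) :
    ∫ y in a..b, u' y = 0 := by
  have hint : IntervalIntegrable u' volume a b :=
    (h.continuousOn_deriv hab).intervalIntegrable_of_Icc hab
  obtain ⟨hu, -, -, ha, hb⟩ := h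
  rw [intervalIntegral.integral_eq_sub_of_hasDeriv_right_of_le hab
      (fun y hy => (hu y hy).continuousWithinAt)
      (fun y hy => ((hu y (Ioo_subset_Icc_self hy)).hasDerivAt
        (Icc_mem_nhds hy.1 hy.2)).hasDerivWithinAt)
      hint, ha, hb, sub_zero]

theorem norm_deriv_sub_le (h : IsDirDom a b u u' g) {y : ℝ} (hy : y ∈ Icc a b) :
    ‖u' y - u' a‖ ≤ ∫ t in a..b, ‖g t‖ := by
  rw [h.2.1 y hy, add_sub_cancel_left]
  have hab : a ≤ b := hy.1.trans hy.2
  exact (intervalIntegral.norm_integral_le_integral_norm hy.1).trans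
    (intervalIntegral.integral_mono_interval le_rfl hy.1 hy.2
      (ae_of_all _ fun t => norm_nonneg _) (h.intervalIntegrable hab).norm)

theorem norm_deriv_left_le (h : IsDirDom a b u u' g) (hab : a < b) :
    ‖u' a‖ ≤ ∫ t in a..b, ‖g t‖ := by
  have hd : 0 < b - a := sub_pos.2 hab
  have hmean : (b - a) • u' a = ∫ y in a..b, (u' a - u' y) := by
    rw [intervalIntegral.integral_sub intervalIntegrable_const
      ((h.continuousOn_deriv hab.le).intervalIntegrable_of_Icc hab.le),
      h.integral_deriv_eq_zero hab.le, intervalIntegral.integral_const, sub_zero]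
  have hbound := intervalIntegral.norm_integral_le_of_norm_le_const
    (f := fun y => u' a - u' y) (C := ∫ t in a..b, ‖g t‖) (a := a) (b := b) fun y hy => by
      rw [norm_sub_rev]
      rw [uIoc_of_le hab.le] at hy
      exact h.norm_deriv_sub_le (Ioc_subset_Icc_self hy)
  rw [← hmean, norm_smul, Real.norm_of_nonneg hd.le, abs_of_pos hd] at hbound
  nlinarith

theorem norm_deriv_right_le (h : IsDirDom a b u u' g) (hab : a < b) :
    ‖u' b‖ ≤ 2 * ∫ t in a..b, ‖g t‖ := by
  have hdiff := h.norm_deriv_sub_le (right_mem_Icc.2 hab.le)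
  have hleft := h.norm_deriv_left_le hab
  linarith [norm_le_norm_add_norm_sub' (u' b) (u' a)]

theorem trace_sq_div_le (h : IsDirDom a b u u' g) (hab : a < b) :
    (‖u' a‖ ^ 2 + ‖u' b‖ ^ 2) / (b - a) ≤ 5 * ∫ t in a..b, ‖g t‖ ^ 2 := by
  have hd : 0 < b - a := sub_pos.2 hab
  have hCS := sq_intervalIntegral_le_mul_intervalIntegral_sq hab
    (h.intervalIntegrable hab.le).norm (h.intervalIntegrable_norm_sq hab.le)
  have ha := h.norm_deriv_left_le hab
  have hb := h.norm_deriv_right_le hab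
  rw [div_le_iff₀ hd]
  nlinarith [norm_nonneg (u' a), norm_nonneg (u' b)]

end IsDirDom

theorem hasDerivAt_ofReal_sub (a y : ℝ) : HasDerivAt (fun y : ℝ => (y : ℂ) - a) 1 y := by
  simpa using (hasDerivAt_id y).ofReal_comp.sub_const (a : ℂ)

noncomputable def cubicLift (a b : ℝ) (p q : ℂ) (y : ℝ) : ℂ :=
  (p + q) / ((b : ℂ) - a) ^ 2 * ((y : ℂ) - a) ^ 3
    - (2 * p + q) / ((b : ℂ) - a) * ((y : ℂ) - a) ^ 2 + p * ((y : ℂ) - a)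

noncomputable def cubicLift' (a b : ℝ) (p q : ℂ) (y : ℝ) : ℂ :=
  3 * (p + q) / ((b : ℂ) - a) ^ 2 * ((y : ℂ) - a) ^ 2
    - 2 * (2 * p + q) / ((b : ℂ) - a) * ((y : ℂ) - a) + p

noncomputable def cubicLift'' (a b : ℝ) (p q : ℂ) (y : ℝ) : ℂ :=
  6 * (p + q) / ((b : ℂ) - a) ^ 2 * ((y : ℂ) - a) - 2 * (2 * p + q) / ((b : ℂ) - a)

section CubicLift

variable {a b : ℝ} {p q : ℂ}

theorem hasDerivAt_cubicLift (a b : ℝ) (p q : ℂ) (y : ℝ) :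
    HasDerivAt (cubicLift a b p q) (cubicLift' a b p q y) y := by
  have hz := hasDerivAt_ofReal_sub a y
  refine ((((hz.pow 3).const_mul _).sub ((hz.pow 2).const_mul _)).add
    (hz.const_mul p)).congr_deriv ?_
  simp only [cubicLift']
  ring

theorem hasDerivAt_cubicLift' (a b : ℝ) (p q : ℂ) (y : ℝ) :
    HasDerivAt (cubicLift' a b p q) (cubicLift'' a b p q y) y := by
  have hz := hasDerivAt_ofReal_sub a y
  refine ((((hz.pow 2).const_mul _).sub (hz.const_mul _)).add_const p).congr_deriv ?_
  simp only [cubicLift'']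
  ring

theorem continuous_cubicLift'' (a b : ℝ) (p q : ℂ) : Continuous (cubicLift'' a b p q) := by
  unfold cubicLift''
  fun_prop

theorem cubicLift'_left : cubicLift' a b p q a = p := by
  simp [cubicLift']

theorem cubicLift'_right (hab : a < b) : cubicLift' a b p q b = q := by
  have hd : (b : ℂ) - a ≠ 0 := sub_ne_zero.2 (by exact_mod_cast hab.ne')
  simp only [cubicLift']
  field_simp
  ring

theorem cubicLift_left : cubicLift a b p q a = 0 := by
  simp [cubicLift]

theorem cubicLift_right (hab : a < b) : cubicLift a b p q b = 0 := by
  have hd : (b : ℂ) - a ≠ 0 := sub_ne_zero.2 (by exact_mod_cast hab.ne')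
  simp only [cubicLift]
  field_simp
  ring

theorem norm_cubicLift''_le (hab : a < b) {y : ℝ} (hy : y ∈ Icc a b) :
    ‖cubicLift'' a b p q y‖ ≤ (10 * ‖p‖ + 8 * ‖q‖) / (b - a) := by
  have hd : 0 < b - a := sub_pos.2 hab
  have hnorm : ∀ c : ℝ, ‖(c : ℂ) - a‖ = |c - a| := fun c => by
    rw [← Complex.ofReal_sub, Complex.norm_real, Real.norm_eq_abs]
  have hyb : |y - a| ≤ b - a := abs_le.2 ⟨by linarith [hy.1], by linarith [hy.2]⟩
  calc ‖cubicLift'' a b p q y‖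
      ≤ 6 * (‖p‖ + ‖q‖) / (b - a) ^ 2 * |y - a| + 2 * (2 * ‖p‖ + ‖q‖) / (b - a) := by
        simp only [cubicLift'']
        refine (norm_sub_le _ _).trans (add_le_add ?_ ?_)
        · rw [norm_mul, norm_div, norm_pow, hnorm, hnorm, abs_of_pos hd, norm_mul]
          gcongr
          · norm_num
          · exact norm_add_le p q
        · rw [norm_div, hnorm, abs_of_pos hd, norm_mul]
          gcongr
          · norm_num
          · calc ‖2 * p + q‖ ≤ ‖2 * p‖ + ‖q‖ := norm_add_le _ _
              _ = 2 * ‖p‖ + ‖q‖ := by rw [norm_mul]; norm_num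
    _ ≤ 6 * (‖p‖ + ‖q‖) / (b - a) ^ 2 * (b - a) + 2 * (2 * ‖p‖ + ‖q‖) / (b - a) := by gcongr
    _ = (10 * ‖p‖ + 8 * ‖q‖) / (b - a) := by field_simp; ring

theorem isDirDom_cubicLift (hab : a < b) :
    IsDirDom a b (cubicLift a b p q) (cubicLift' a b p q) (cubicLift'' a b p q) := by
  refine ⟨fun y _ => (hasDerivAt_cubicLift a b p q y).hasDerivWithinAt, fun y _ => ?_, ?_,
    cubicLift_left, cubicLift_right hab⟩
  · rw [intervalIntegral.integral_eq_sub_of_hasDerivAt (fun t _ => hasDerivAt_cubicLift' a b p q t)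
      ((continuous_cubicLift'' a b p q).intervalIntegrable a y), add_sub_cancel]
  · exact MemLp.of_bound (continuous_cubicLift'' a b p q).aestronglyMeasurable _
      ((ae_restrict_iff' measurableSet_Ioo).2 (ae_of_all _ fun y hy =>
        norm_cubicLift''_le hab (Ioo_subset_Icc_self hy)))

theorem integral_norm_cubicLift''_sq_le (hab : a < b) :
    ∫ t in a..b, ‖cubicLift'' a b p q t‖ ^ 2 ≤ 200 * ((‖p‖ ^ 2 + ‖q‖ ^ 2) / (b - a)) := by
  have hd : 0 < b - a := sub_pos.2 hab
  calc ∫ t in a..b, ‖cubicLift'' a b p q t‖ ^ 2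
      ≤ ∫ _ in a..b, ((10 * ‖p‖ + 8 * ‖q‖) / (b - a)) ^ 2 :=
        intervalIntegral.integral_mono_on hab.le
          (((continuous_cubicLift'' a b p q).norm.pow 2).intervalIntegrable a b)
          intervalIntegrable_const
          fun t ht => pow_le_pow_left₀ (norm_nonneg _) (norm_cubicLift''_le hab ht) 2
    _ = (10 * ‖p‖ + 8 * ‖q‖) ^ 2 / (b - a) := by
        rw [intervalIntegral.integral_const, smul_eq_mul]
        field_simp
    _ ≤ 200 * ((‖p‖ ^ 2 + ‖q‖ ^ 2) / (b - a)) := by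
        rw [mul_div_assoc']
        gcongr
        nlinarith [sq_nonneg (10 * ‖p‖ - 8 * ‖q‖)]

end CubicLift

theorem exists_isDirDom_deriv_eq {a b : ℝ} (hab : a < b) (p q : ℂ) :
    ∃ u u' g : ℝ → ℂ, IsDirDom a b u u' g ∧ u' a = p ∧ u' b = q ∧
      ∫ t in a..b, ‖g t‖ ^ 2 ≤ 200 * ((‖p‖ ^ 2 + ‖q‖ ^ 2) / (b - a)) :=
  ⟨_, _, _, isDirDom_cubicLift hab, cubicLift'_left, cubicLift'_right hab,
    integral_norm_cubicLift''_sq_le hab⟩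

theorem exists_weighted_sum_sq_equiv_iff {d : ℕ → ℝ} (hd : ∀ n, 0 < d n) :
    (∃ c C : ℝ, 0 < c ∧ ∀ (s : ℕ → ℂ) (F : Finset ℕ),
        c * ∑ n ∈ F, ‖s n‖ ^ 2 ≤ ∑ n ∈ F, ‖s n‖ ^ 2 / d n ∧
        ∑ n ∈ F, ‖s n‖ ^ 2 / d n ≤ C * ∑ n ∈ F, ‖s n‖ ^ 2) ↔
      ((∃ ε : ℝ, 0 < ε ∧ ∀ n, ε ≤ d n) ∧ ∃ M : ℝ, ∀ n, d n ≤ M) := by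
  constructor
  · rintro ⟨c, C, hc, h⟩
    have hunit : ∀ n, c ≤ 1 / d n ∧ 1 / d n ≤ C := fun n => by
      simpa using h (Pi.single n 1) {n}
    have hC : 0 < C := (one_div_pos.2 (hd 0)).trans_le (hunit 0).2
    refine ⟨⟨1 / C, one_div_pos.2 hC, fun n => ?_⟩, 1 / c, fun n => ?_⟩
    · rw [div_le_iff₀ hC, ← div_le_iff₀' (hd n)]
      exact (hunit n).2
    · rw [le_div_iff₀ hc, ← le_div_iff₀' (hd n)]
      exact (hunit n).1
  · rintro ⟨⟨ε, hε, hεd⟩, M, hdM⟩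
    have hM : 0 < M := (hd 0).trans_le (hdM 0)
    refine ⟨1 / M, 1 / ε, one_div_pos.2 hM, fun s F => ⟨?_, ?_⟩⟩ <;>
      rw [Finset.mul_sum] <;> refine Finset.sum_le_sum fun n _ => ?_ <;> rw [one_div_mul_eq_div]
    · exact div_le_div_of_nonneg_left (sq_nonneg _) (hd n) (hdM n)
    · exact div_le_div_of_nonneg_left (sq_nonneg _) hε (hεd n)

/-- For a strictly increasing sequence `x : ℕ → ℝ` with gaps
`d n = x (n+1) − x n`, the direct sum of the trace maps
`τ_n u = (u'(x_n), −u'(x_{n+1}))` on the Dirichlet domains `D(A_n)` on `[x_n, x_{n+1}]`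
(with the graph norm `‖u‖² = ∫ |u''|²`, i.e. `λ = 0`) is bounded and surjective onto
`ℓ²_d(ℕ) ⊕ ℓ²_d(ℕ)`, where `ℓ²_d(ℕ) = {s : Σ_n |s_n|²/d_n < ∞}`. Moreover
`ℓ²_d(ℕ) = ℓ²(ℕ)` with equivalent norms iff `0 < inf_n d_n ≤ sup_n d_n < ∞`. -/
theorem stmt_14 (x : ℕ → ℝ) (hx : StrictMono x) :
    (∃ C : ℝ, 0 < C ∧ ∀ u u' g : ℕ → ℝ → ℂ,
      (∀ n, IsDirDom (x n) (x (n + 1)) (u n) (u' n) (g n)) →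
      Summable (fun n => ∫ t in (x n)..(x (n + 1)), ‖g n t‖ ^ 2) →
      (Summable (fun n =>
          (‖u' n (x n)‖ ^ 2 + ‖u' n (x (n + 1))‖ ^ 2) / (x (n + 1) - x n)) ∧
        ∑' n, (‖u' n (x n)‖ ^ 2 + ‖u' n (x (n + 1))‖ ^ 2) / (x (n + 1) - x n)
          ≤ C ^ 2 * ∑' n, ∫ t in (x n)..(x (n + 1)), ‖g n t‖ ^ 2)) ∧
    (∀ s t : ℕ → ℂ,
      Summable (fun n => (‖s n‖ ^ 2 + ‖t n‖ ^ 2) / (x (n + 1) - x n)) →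
      ∃ u u' g : ℕ → ℝ → ℂ,
        (∀ n, IsDirDom (x n) (x (n + 1)) (u n) (u' n) (g n)) ∧
        Summable (fun n => ∫ t' in (x n)..(x (n + 1)), ‖g n t'‖ ^ 2) ∧
        ∀ n, u' n (x n) = s n ∧ -(u' n (x (n + 1))) = t n) ∧
    ((∃ c C : ℝ, 0 < c ∧ ∀ (s : ℕ → ℂ) (F : Finset ℕ),
        c * ∑ n ∈ F, ‖s n‖ ^ 2 ≤ ∑ n ∈ F, ‖s n‖ ^ 2 / (x (n + 1) - x n) ∧
        ∑ n ∈ F, ‖s n‖ ^ 2 / (x (n + 1) - x n) ≤ C * ∑ n ∈ F, ‖s n‖ ^ 2) ↔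
      ((∃ ε : ℝ, 0 < ε ∧ ∀ n, ε ≤ x (n + 1) - x n) ∧
        ∃ M : ℝ, ∀ n, x (n + 1) - x n ≤ M)) := by
  have hxn : ∀ n, x n < x (n + 1) := fun n => hx n.lt_succ_self
  refine ⟨⟨3, three_pos, fun u u' g hu hg => ?_⟩, fun s t hst => ?_,
    exists_weighted_sum_sq_equiv_iff fun n => sub_pos.2 (hxn n)⟩
  · have hle : ∀ n, (‖u' n (x n)‖ ^ 2 + ‖u' n (x (n + 1))‖ ^ 2) / (x (n + 1) - x n)
        ≤ 3 ^ 2 * ∫ t in (x n)..(x (n + 1)), ‖g n t‖ ^ 2 := fun n =>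
      ((hu n).trace_sq_div_le (hxn n)).trans <| mul_le_mul_of_nonneg_right (by norm_num)
        (intervalIntegral.integral_nonneg (hxn n).le fun _ _ => sq_nonneg _)
    have hnonneg : ∀ n, 0 ≤ (‖u' n (x n)‖ ^ 2 + ‖u' n (x (n + 1))‖ ^ 2) / (x (n + 1) - x n) :=
      fun n => div_nonneg (by positivity) (sub_pos.2 (hxn n)).le
    have hsum := Summable.of_nonneg_of_le hnonneg hle (hg.mul_left _)
    exact ⟨hsum, (hsum.tsum_le_tsum hle (hg.mul_left _)).trans_eq tsum_mul_left⟩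
  · choose u u' g hu hleft hright hbound using
      fun n => exists_isDirDom_deriv_eq (hxn n) (s n) (-t n)
    refine ⟨u, u', g, hu, ?_, fun n => ⟨hleft n, by rw [hright n, neg_neg]⟩⟩
    refine Summable.of_nonneg_of_le (fun n => ?_) (fun n => ?_) (hst.mul_left 200)
    · exact intervalIntegral.integral_nonneg (hxn n).le fun _ _ => sq_nonneg _
    · simpa only [norm_neg] using hbound n
end

section
/- Fix α ∈ (0,1) and k ∈ ℤ \ {0}. The function f_ξ(x) := ξ exp(−|k| x^{α+1}/(α+1)) is the unique solution in L²_w(ℝ₊) (with weight x^{−α}) of the boundary value problem f'' − (α/x) f' − k² x^{2α} f = 0, f(0) = ξ, and the corresponding number G_k*G_k = ∫₀^∞ exp(−2|k|x^{α+1}/(α+1)) x^{−α} dx = |k|^{(α−1)/(α+1)} ∫₀^∞ exp(−2x^{α+1}/(α+1)) x^{−α} dx. -/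
/-!
Write `F = exp(-|k| x^{α+1}/(α+1))`. Any solution `g` and `F` itself solve
`u'' = (α/x) u' + k² x^{2α} u`, so their Wronskian `W = g'F - gF'` satisfies `W' = (α/x) W`,
i.e. `W = C x^α`. Reduction of order, `(g/F)' = W/F²`, then gives `g = D F + B F⁻¹`. The growing
part `B F⁻¹` would make `|g|² x^{-α}` eventually at least a multiple of `x^{-α}`, which is not
integrable at infinity since `α ≤ 1`; so `B = 0`, and `D = g(0)` by continuity at `0`.
The value of `G_k* G_k` comes from `∫₀^∞ x^q e^{-b x^p} dx = b^{-(q+1)/p} Γ((q+1)/p) / p`,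
which is homogeneous of degree `-(q+1)/p` in `b`.
-/

open MeasureTheory Set

/-- `f_ξ(x) = ξ exp(−|k| x^{α+1}/(α+1))`. -/
noncomputable def grushinSol (α : ℝ) (k : ℤ) (ξ : ℂ) (x : ℝ) : ℂ :=
  ξ * (Real.exp (-(|(k : ℝ)| * x ^ (α + 1) / (α + 1))) : ℂ)

open Filter Topology

lemma exists_eq_const_of_hasDerivAt_zero {E : Type*} [NormedAddCommGroup E] [NormedSpace ℝ E]
    {s : Set ℝ} (hs : IsOpen s) (hs' : IsPreconnected s) {f : ℝ → E}
    (hf : ∀ x ∈ s, HasDerivAt f 0 x) : ∃ c, ∀ x ∈ s, f x = c :=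
  hs.exists_is_const_of_deriv_eq_zero hs'
    (fun x hx => (hf x hx).differentiableAt.differentiableWithinAt) fun x hx => (hf x hx).deriv

lemma exists_eq_rpow_smul_of_hasDerivAt {E : Type*} [NormedAddCommGroup E] [NormedSpace ℝ E]
    {α : ℝ} {W : ℝ → E} (hW : ∀ x ∈ Ioi (0 : ℝ), HasDerivAt W ((α / x) • W x) x) :
    ∃ C : E, ∀ x ∈ Ioi (0 : ℝ), W x = x ^ α • C := by
  have hV : ∀ x ∈ Ioi (0 : ℝ), HasDerivAt (fun x => x ^ (-α) • W x) 0 x := by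
    intro x hx
    refine ((Real.hasDerivAt_rpow_const (p := -α) (Or.inl (ne_of_gt hx))).smul
      (hW x hx)).congr_deriv ?_
    rw [smul_smul, ← add_smul, Real.rpow_sub_one (ne_of_gt hx)]
    field_simp
    simp
  obtain ⟨C, hC⟩ := exists_eq_const_of_hasDerivAt_zero isOpen_Ioi isPreconnected_Ioi hV
  refine ⟨C, fun x hx => ?_⟩
  rw [← hC x hx, smul_smul, ← Real.rpow_add hx, add_neg_cancel, Real.rpow_zero, one_smul]

lemma hasDerivAt_wronskian {𝔸 : Type*} [NormedCommRing 𝔸] [NormedAlgebra ℝ 𝔸]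
    {f df g dg : ℝ → 𝔸} {p q : 𝔸} {x : ℝ}
    (hf : HasDerivAt f (df x) x) (hdf : HasDerivAt df (p * df x + q * f x) x)
    (hg : HasDerivAt g (dg x) x) (hdg : HasDerivAt dg (p * dg x + q * g x) x) :
    HasDerivAt (fun y => dg y * f y - g y * df y) (p * (dg x * f x - g x * df x)) x :=
  ((hdg.mul hf).sub (hg.mul hdf)).congr_deriv (by ring)

lemma not_integrableOn_Ioi_of_eventually_mul_rpow_le {f : ℝ → ℝ} {c s : ℝ} (hc : 0 < c)
    (hs : -1 ≤ s) (hf : ∀ᶠ x in atTop, c * x ^ s ≤ f x) : ¬ IntegrableOn f (Ioi 0) := by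
  intro hint
  obtain ⟨M, hM⟩ := eventually_atTop.1 hf
  have ht : 0 < max M 1 := lt_max_of_lt_right one_pos
  have h : IntegrableOn (fun x => c * x ^ s) (Ioi (max M 1)) := by
    refine Integrable.mono' (hint.mono_set (Ioi_subset_Ioi ht.le))
      (measurable_const.mul (measurable_id.pow_const s)).aestronglyMeasurable ?_
    filter_upwards [ae_restrict_mem measurableSet_Ioi] with x hx
    rw [Real.norm_of_nonneg (by have : 0 < x := ht.trans hx; positivity)]
    exact hM x ((le_max_left M 1).trans hx.le)
  rw [IntegrableOn, integrable_const_mul_iff (isUnit_iff_ne_zero.2 hc.ne')] at h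
  linarith [(integrableOn_Ioi_rpow_iff ht).1 h]

lemma setIntegral_rpow_mul_exp_neg_mul_mul_rpow {p q b c : ℝ} (hp : 0 < p) (hq : -1 < q)
    (hb : 0 < b) (hc : 0 < c) :
    ∫ x in Ioi (0 : ℝ), x ^ q * Real.exp (-(c * b) * x ^ p)
      = c ^ (-(q + 1) / p) * ∫ x in Ioi (0 : ℝ), x ^ q * Real.exp (-b * x ^ p) := by
  rw [integral_rpow_mul_exp_neg_mul_rpow hp hq (mul_pos hc hb),
    integral_rpow_mul_exp_neg_mul_rpow hp hq hb, Real.mul_rpow hc.le hb.le]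
  ring

noncomputable def grushinExp (α a x : ℝ) : ℝ := Real.exp (-(a * x ^ (α + 1) / (α + 1)))

lemma grushinExp_mul (α a b x : ℝ) :
    grushinExp α a x * grushinExp α b x = grushinExp α (a + b) x := by
  rw [grushinExp, grushinExp, grushinExp, ← Real.exp_add]
  ring_nf

lemma grushinExp_neg_mul_self (α a x : ℝ) : grushinExp α (-a) x * grushinExp α a x = 1 := by
  rw [grushinExp_mul, neg_add_cancel]
  simp [grushinExp]

lemma grushinExp_at_zero {α : ℝ} (hα : α + 1 ≠ 0) (a : ℝ) : grushinExp α a 0 = 1 := by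
  simp [grushinExp, Real.zero_rpow hα]

lemma hasDerivAt_grushinExp {α : ℝ} (hα : 0 ≤ α) (a x : ℝ) :
    HasDerivAt (grushinExp α a) (-(a * x ^ α) * grushinExp α a x) x := by
  have hpow : HasDerivAt (fun y : ℝ => y ^ (α + 1)) ((α + 1) * x ^ α) x := by
    simpa using Real.hasDerivAt_rpow_const (x := x) (p := α + 1) (Or.inr (by linarith))
  refine (((hpow.const_mul a).div_const (α + 1)).fun_neg.exp).congr_deriv ?_
  rw [grushinExp]
  field_simp

lemma hasDerivAt_deriv_grushinExp {α a : ℝ} (hα : 0 ≤ α) {x : ℝ} (hx : 0 < x) :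
    HasDerivAt (fun y => -(a * y ^ α) * grushinExp α a y)
      (α / x * (-(a * x ^ α) * grushinExp α a x) + a ^ 2 * x ^ (2 * α) * grushinExp α a x) x := by
  have hpow : HasDerivAt (fun y : ℝ => y ^ α) (α * x ^ (α - 1)) x :=
    Real.hasDerivAt_rpow_const (Or.inl hx.ne')
  refine ((hpow.const_mul a).fun_neg.mul (hasDerivAt_grushinExp hα a x)).congr_deriv ?_
  rw [Real.rpow_sub hx, Real.rpow_one, show 2 * α = α + α by ring, Real.rpow_add hx]
  field_simp

lemma tendsto_grushinExp_atTop {α a : ℝ} (hα : -1 < α) (ha : 0 < a) :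
    Tendsto (grushinExp α a) atTop (𝓝 0) := by
  have hα1 : 0 < α + 1 := by linarith
  refine Real.tendsto_exp_atBot.comp (tendsto_neg_atTop_atBot.comp ?_)
  exact ((tendsto_rpow_atTop hα1).const_mul_atTop ha).atTop_div_const hα1

lemma continuous_ofReal_grushinExp {α : ℝ} (hα : 0 ≤ α) (a : ℝ) :
    Continuous fun x => (grushinExp α a x : ℂ) :=
  continuous_iff_continuousAt.2 fun x => (hasDerivAt_grushinExp hα a x).ofReal_comp.continuousAt

def SolvesGrushinODE (α : ℝ) (k : ℤ) (g : ℝ → ℂ) : Prop :=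
  ∀ x ∈ Ioi (0 : ℝ),
    HasDerivAt g (deriv g x) x ∧
    HasDerivAt (deriv g) (deriv (deriv g) x) x ∧
    deriv (deriv g) x - ((α / x : ℝ) : ℂ) * deriv g x
      - (k : ℂ) ^ 2 * ((x ^ (2 * α) : ℝ) : ℂ) * g x = 0

section SolvesGrushinODE

variable {α : ℝ} {k : ℤ} {g : ℝ → ℂ}

lemma solvesGrushinODE_of_hasDerivAt {dg : ℝ → ℂ} (hg : ∀ x, HasDerivAt g (dg x) x)
    (hdg : ∀ x ∈ Ioi (0 : ℝ), HasDerivAt dg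
      (((α / x : ℝ) : ℂ) * dg x + (k : ℂ) ^ 2 * ((x ^ (2 * α) : ℝ) : ℂ) * g x) x) :
    SolvesGrushinODE α k g := by
  have hderiv : deriv g = dg := funext fun x => (hg x).deriv
  intro x hx
  rw [hderiv, (hdg x hx).deriv]
  exact ⟨hg x, hdg x hx, by ring⟩

lemma SolvesGrushinODE.hasDerivAt_deriv (hg : SolvesGrushinODE α k g) {x : ℝ} (hx : 0 < x) :
    HasDerivAt (deriv g)
      (((α / x : ℝ) : ℂ) * deriv g x + (k : ℂ) ^ 2 * ((x ^ (2 * α) : ℝ) : ℂ) * g x) x := by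
  obtain ⟨-, hdg, hode⟩ := hg x hx
  exact hdg.congr_deriv (by linear_combination hode)

end SolvesGrushinODE

lemma grushinSol_at_zero {α : ℝ} (hα : α + 1 ≠ 0) (k : ℤ) (ξ : ℂ) : grushinSol α k ξ 0 = ξ := by
  simp [grushinSol, Real.zero_rpow hα]

lemma ofReal_abs_intCast_sq (k : ℤ) : ((|(k : ℝ)| : ℝ) : ℂ) ^ 2 = (k : ℂ) ^ 2 := by
  norm_cast
  exact sq_abs k

lemma solvesGrushinODE_grushinSol {α : ℝ} (hα : 0 ≤ α) (k : ℤ) (ξ : ℂ) :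
    SolvesGrushinODE α k (grushinSol α k ξ) := by
  refine solvesGrushinODE_of_hasDerivAt
    (dg := fun y => ξ * ((-(|(k : ℝ)| * y ^ α) * grushinExp α |(k : ℝ)| y : ℝ) : ℂ))
    (fun x => ((hasDerivAt_grushinExp hα _ x).ofReal_comp.const_mul ξ)) fun x hx => ?_
  refine ((hasDerivAt_deriv_grushinExp hα hx).ofReal_comp.const_mul ξ).congr_deriv ?_
  rw [← ofReal_abs_intCast_sq]
  simp only [grushinSol, grushinExp]
  push_cast
  ring

lemma integrableOn_norm_grushinSol_sq_mul_rpow {α : ℝ} (hα : α ∈ Ioo (-1 : ℝ) 1) {k : ℤ}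
    (hk : k ≠ 0) (ξ : ℂ) :
    IntegrableOn (fun x => ‖grushinSol α k ξ x‖ ^ 2 * x ^ (-α)) (Ioi 0) := by
  have hα1 : 0 < α + 1 := by linarith [hα.1]
  have hb : 0 < 2 * |(k : ℝ)| / (α + 1) := by positivity
  have h := (integrableOn_rpow_mul_exp_neg_mul_rpow (s := -α) (by linarith [hα.2]) hα1 hb)
  refine IntegrableOn.congr_fun (h.const_mul (‖ξ‖ ^ 2)) (fun x _ => ?_) measurableSet_Ioi
  rw [grushinSol, norm_mul, Complex.norm_real, Real.norm_of_nonneg (Real.exp_pos _).le, mul_pow,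
    ← Real.exp_nat_mul]
  ring_nf

lemma grushinExp_mul_rpow_neg_eq (α c x : ℝ) :
    grushinExp α c x * x ^ (-α) = x ^ (-α) * Real.exp (-(c / (α + 1)) * x ^ (α + 1)) := by
  rw [grushinExp, mul_comm]
  ring_nf

lemma setIntegral_grushinExp_mul_mul_rpow_neg {α a b : ℝ} (hα : α ∈ Ioo (-1 : ℝ) 1)
    (ha : 0 < a) (hb : 0 < b) :
    ∫ x in Ioi (0 : ℝ), grushinExp α (b * a) x * x ^ (-α)
      = a ^ ((α - 1) / (α + 1)) * ∫ x in Ioi (0 : ℝ), grushinExp α b x * x ^ (-α) := by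
  have hα1 : 0 < α + 1 := by linarith [hα.1]
  simp only [grushinExp_mul_rpow_neg_eq, mul_div_right_comm b a, mul_comm (b / (α + 1)) a]
  rw [setIntegral_rpow_mul_exp_neg_mul_mul_rpow hα1 (by linarith [hα.2]) (by positivity) ha]
  ring_nf

lemma SolvesGrushinODE.exists_wronskian_eq {α : ℝ} (hα : 0 ≤ α) {k : ℤ} {g : ℝ → ℂ}
    (hg : SolvesGrushinODE α k g) :
    ∃ C : ℂ, ∀ x ∈ Ioi (0 : ℝ), deriv g x * (grushinExp α |(k : ℝ)| x : ℂ)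
      - g x * ((-(|(k : ℝ)| * x ^ α) * grushinExp α |(k : ℝ)| x : ℝ) : ℂ) = C * (x ^ α : ℝ) := by
  have hW : ∀ x ∈ Ioi (0 : ℝ), HasDerivAt (fun y => deriv g y * (grushinExp α |(k : ℝ)| y : ℂ)
      - g y * ((-(|(k : ℝ)| * y ^ α) * grushinExp α |(k : ℝ)| y : ℝ) : ℂ))
      ((α / x) • (deriv g x * (grushinExp α |(k : ℝ)| x : ℂ)
      - g x * ((-(|(k : ℝ)| * x ^ α) * grushinExp α |(k : ℝ)| x : ℝ) : ℂ))) x := by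
    intro x hx
    rw [Complex.real_smul]
    refine hasDerivAt_wronskian (hasDerivAt_grushinExp hα _ x).ofReal_comp ?_ (hg x hx).1
      (hg.hasDerivAt_deriv hx)
    refine (hasDerivAt_deriv_grushinExp hα hx).ofReal_comp.congr_deriv ?_
    rw [← ofReal_abs_intCast_sq]
    push_cast
    ring
  obtain ⟨C, hC⟩ := exists_eq_rpow_smul_of_hasDerivAt hW
  exact ⟨C, fun x hx => by rw [hC x hx, Complex.real_smul, mul_comm]⟩

lemma exists_eq_grushinExp_add_of_wronskian_eq {α a : ℝ} (hα : 0 ≤ α) (ha : a ≠ 0)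
    {g dg : ℝ → ℂ} {C : ℂ} (hg : ∀ x ∈ Ioi (0 : ℝ), HasDerivAt g (dg x) x)
    (hW : ∀ x ∈ Ioi (0 : ℝ), dg x * (grushinExp α a x : ℂ)
      - g x * ((-(a * x ^ α) * grushinExp α a x : ℝ) : ℂ) = C * (x ^ α : ℝ)) :
    ∃ D B : ℂ, ∀ x ∈ Ioi (0 : ℝ),
      g x = D * (grushinExp α a x : ℂ) + B * (grushinExp α (-a) x : ℂ) := by
  have hFE (x : ℝ) : (grushinExp α (-a) x : ℂ) * grushinExp α a x = 1 := by
    exact_mod_cast grushinExp_neg_mul_self α a x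
  have hE2 (x : ℝ) : (grushinExp α (-(2 * a)) x : ℂ)
      = grushinExp α (-a) x * grushinExp α (-a) x := by
    rw [← Complex.ofReal_mul, grushinExp_mul]; ring_nf
  have hE2F (x : ℝ) : (grushinExp α (-(2 * a)) x : ℂ) * grushinExp α a x = grushinExp α (-a) x := by
    rw [← Complex.ofReal_mul, grushinExp_mul]; ring_nf
  -- With `F⁻¹ = grushinExp α (-a)` and `F⁻² = grushinExp α (-(2 * a))`: `(g F⁻¹)' = W F⁻²` and
  -- `(F⁻²)' = 2 a x ^ α F⁻²`, so `g F⁻¹ - C / (2 a) F⁻²` is constant.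
  have hP : ∀ x ∈ Ioi (0 : ℝ), HasDerivAt
      (fun x => g x * grushinExp α (-a) x - C / (2 * a) * grushinExp α (-(2 * a)) x) 0 x := by
    intro x hx
    have hinv : (a : ℂ) * (a : ℂ)⁻¹ = 1 := mul_inv_cancel₀ (by exact_mod_cast ha)
    have hWx := hW x hx
    refine (((hg x hx).mul (hasDerivAt_grushinExp hα (-a) x).ofReal_comp).sub
      ((hasDerivAt_grushinExp hα _ x).ofReal_comp.const_mul _)).congr_deriv ?_
    push_cast at hWx ⊢
    linear_combination (grushinExp α (-a) x : ℂ) ^ 2 * hWx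
      - (dg x * grushinExp α (-a) x + g x * a * (x ^ α : ℝ) * grushinExp α (-a) x) * hFE x
      - C * (x ^ α : ℝ) * hE2 x - C * (x ^ α : ℝ) * grushinExp α (-(2 * a)) x * hinv
  obtain ⟨D, hD⟩ := exists_eq_const_of_hasDerivAt_zero isOpen_Ioi isPreconnected_Ioi hP
  refine ⟨D, C / (2 * a), fun x hx => ?_⟩
  linear_combination (grushinExp α a x : ℂ) * hD x hx - g x * hFE x + C / (2 * a) * hE2F x

lemma eq_zero_of_integrableOn_of_eq_grushinExp_add {α a : ℝ} (hα : α ∈ Ioc (-1 : ℝ) 1)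
    (ha : 0 < a) {g : ℝ → ℂ} {D B : ℂ}
    (hrep : ∀ x ∈ Ioi (0 : ℝ), g x = D * (grushinExp α a x : ℂ) + B * (grushinExp α (-a) x : ℂ))
    (hint : IntegrableOn (fun x => ‖g x‖ ^ 2 * x ^ (-α)) (Ioi 0)) : B = 0 := by
  by_contra hB
  have hF := tendsto_grushinExp_atTop hα.1 ha
  have hFc : Tendsto (fun x => (grushinExp α a x : ℂ)) atTop (𝓝 0) := by
    rw [← Complex.ofReal_zero]
    exact (Complex.continuous_ofReal.tendsto 0).comp hF
  -- `g F = D F² + B`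
  have hgF : Tendsto (fun x => g x * grushinExp α a x) atTop (𝓝 B) := by
    refine (by simpa using ((hFc.const_mul D).mul hFc).add_const B :
      Tendsto (fun x => D * grushinExp α a x * grushinExp α a x + B) atTop (𝓝 B)).congr' ?_
    filter_upwards [eventually_gt_atTop 0] with x hx
    have hFE : (grushinExp α (-a) x : ℂ) * grushinExp α a x = 1 := by
      exact_mod_cast grushinExp_neg_mul_self α a x
    rw [hrep x hx]
    linear_combination -B * hFE
  have hlow : ∀ᶠ x in atTop, (‖B‖ / 2) ^ 2 * x ^ (-α) ≤ ‖g x‖ ^ 2 * x ^ (-α) := by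
    filter_upwards [hgF.norm.eventually_const_lt (half_lt_self (norm_pos_iff.2 hB)),
      hF.eventually_lt_const one_pos, eventually_gt_atTop 0] with x hgFx hFx hx
    rw [norm_mul, Complex.norm_real,
      Real.norm_of_nonneg (r := grushinExp α a x) (Real.exp_pos _).le] at hgFx
    have : ‖B‖ / 2 ≤ ‖g x‖ :=
      hgFx.le.trans (mul_le_of_le_one_right (norm_nonneg _) hFx.le)
    gcongr
  exact not_integrableOn_Ioi_of_eventually_mul_rpow_le (by positivity) (by linarith [hα.2])
    hlow hint

lemma eq_of_eqOn_Ioi_mul_grushinExp {α a : ℝ} (hα : 0 ≤ α) {g : ℝ → ℂ} {D : ℂ}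
    (hg : ContinuousWithinAt g (Ioi 0) 0)
    (hrep : ∀ x ∈ Ioi (0 : ℝ), g x = D * (grushinExp α a x : ℂ)) : g 0 = D := by
  have hF : ContinuousAt (fun x => D * (grushinExp α a x : ℂ)) 0 :=
    continuousAt_const.mul (continuous_ofReal_grushinExp hα a).continuousAt
  have hF0 : D * (grushinExp α a 0 : ℂ) = D := by
    rw [grushinExp_at_zero (by linarith), Complex.ofReal_one, mul_one]
  refine tendsto_nhds_unique hg.tendsto ?_
  rw [← hF0]
  exact (hF.tendsto.mono_left nhdsWithin_le_nhds).congr'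
    (eventually_nhdsWithin_of_forall fun x hx => (hrep x hx).symm)

lemma SolvesGrushinODE.eqOn_grushinSol {α : ℝ} (hα : α ∈ Icc (0 : ℝ) 1) {k : ℤ} (hk : k ≠ 0)
    {g : ℝ → ℂ} (hg : SolvesGrushinODE α k g) (hgc : ContinuousOn g (Ici 0))
    (hint : IntegrableOn (fun x => ‖g x‖ ^ 2 * x ^ (-α)) (Ioi 0)) :
    EqOn g (grushinSol α k (g 0)) (Ici 0) := by
  have ha : 0 < |(k : ℝ)| := abs_pos.2 (Int.cast_ne_zero.2 hk)
  obtain ⟨C, hC⟩ := hg.exists_wronskian_eq hα.1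
  obtain ⟨D, B, hDB⟩ :=
    exists_eq_grushinExp_add_of_wronskian_eq hα.1 ha.ne' (fun x hx => (hg x hx).1) hC
  have hB : B = 0 :=
    eq_zero_of_integrableOn_of_eq_grushinExp_add ⟨by linarith [hα.1], hα.2⟩ ha hDB hint
  have hrep : ∀ x ∈ Ioi (0 : ℝ), g x = D * (grushinExp α |(k : ℝ)| x : ℂ) := by
    simpa [hB] using hDB
  have hD : g 0 = D := eq_of_eqOn_Ioi_mul_grushinExp hα.1
    ((hgc 0 self_mem_Ici).mono Ioi_subset_Ici_self) hrep
  intro x hx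
  rcases (mem_Ici.1 hx).eq_or_lt with rfl | hx
  · exact (grushinSol_at_zero (by linarith [hα.1]) k _).symm
  · rw [hrep x hx, hD]
    rfl

/-- Fix `α ∈ (0,1)` and `k ∈ ℤ \ {0}`. The function
`f_ξ(x) = ξ exp(−|k| x^{α+1}/(α+1))` is the unique solution in the weighted space
`L²_w(ℝ₊)` (weight `x^{−α}`) of `f'' − (α/x) f' − k² x^{2α} f = 0` on `(0,∞)` with
`f(0) = ξ` (continuously at `0`), and
`G_k* G_k = ∫₀^∞ exp(−2|k|x^{α+1}/(α+1)) x^{−α} dx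
  = |k|^{(α−1)/(α+1)} ∫₀^∞ exp(−2x^{α+1}/(α+1)) x^{−α} dx`. -/
theorem stmt_17 (α : ℝ) (hα : α ∈ Ioo (0 : ℝ) 1) (k : ℤ) (hk : k ≠ 0) (ξ : ℂ) :
    -- `f_ξ` solves the boundary value problem and lies in `L²_w(ℝ₊)`:
    (grushinSol α k ξ 0 = ξ ∧
      ContinuousOn (grushinSol α k ξ) (Ici 0) ∧
      (∀ x ∈ Ioi (0 : ℝ),
        HasDerivAt (grushinSol α k ξ) (deriv (grushinSol α k ξ) x) x ∧
        HasDerivAt (deriv (grushinSol α k ξ))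
          (deriv (deriv (grushinSol α k ξ)) x) x ∧
        deriv (deriv (grushinSol α k ξ)) x
            - ((α / x : ℝ) : ℂ) * deriv (grushinSol α k ξ) x
            - (k : ℂ) ^ 2 * ((x ^ (2 * α) : ℝ) : ℂ) * grushinSol α k ξ x = 0) ∧
      IntegrableOn (fun x => ‖grushinSol α k ξ x‖ ^ 2 * x ^ (-α)) (Ioi 0)) ∧
    -- uniqueness:
    (∀ g : ℝ → ℂ, ContinuousOn g (Ici 0) → g 0 = ξ →
      (∀ x ∈ Ioi (0 : ℝ),
        HasDerivAt g (deriv g x) x ∧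
        HasDerivAt (deriv g) (deriv (deriv g) x) x ∧
        deriv (deriv g) x - ((α / x : ℝ) : ℂ) * deriv g x
          - (k : ℂ) ^ 2 * ((x ^ (2 * α) : ℝ) : ℂ) * g x = 0) →
      IntegrableOn (fun x => ‖g x‖ ^ 2 * x ^ (-α)) (Ioi 0) →
      EqOn g (grushinSol α k ξ) (Ici 0)) ∧
    -- the value of `G_k* G_k`:
    (∫ x in Ioi (0 : ℝ), Real.exp (-(2 * |(k : ℝ)| * x ^ (α + 1) / (α + 1))) * x ^ (-α))
      = |(k : ℝ)| ^ ((α - 1) / (α + 1)) *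
        ∫ x in Ioi (0 : ℝ), Real.exp (-(2 * x ^ (α + 1) / (α + 1))) * x ^ (-α) := by
  have hα₀ : 0 ≤ α := hα.1.le
  refine ⟨⟨grushinSol_at_zero (by linarith) k ξ, ?_, solvesGrushinODE_grushinSol hα₀ k ξ, ?_⟩,
    fun g hgc hg0 hg hint => ?_, ?_⟩
  · exact (continuous_const.mul (continuous_ofReal_grushinExp hα₀ _)).continuousOn
  · exact integrableOn_norm_grushinSol_sq_mul_rpow ⟨by linarith, hα.2⟩ hk ξ
  · exact hg0 ▸ SolvesGrushinODE.eqOn_grushinSol (Ioo_subset_Icc_self hα) hk hg hgc hint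
  · exact setIntegral_grushinExp_mul_mul_rpow_neg ⟨by linarith, hα.2⟩
      (abs_pos.2 (Int.cast_ne_zero.2 hk)) two_pos
end
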